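/- Let X be a compact Hausdorff space, Γ ⊆ [Y]^{≤ω} × [X\Y]^{≤ω} a σ-closed cofinal subposet (under coordinatewise inclusion), and {r_{(A,B)} : (A,B) ∈ Γ} an r-skeleton on X with induced space Y satisfying: every countable B ⊆ X \ Y is discrete in X \ Y with cl_X(B) \ B ⊆ Y cosmic, and A ⊆ r_{(A,B)}(X), cl_X(B) \ B ⊆ r_{(A,B)}(X) for all (A,B) ∈ Γ. Define R_{(A,B)} on AD(X) by R_{(A,B)}(x,1) = (x,1) if x ∈ A ∪ B, and R_{(A,B)}(x,i) = (r_{(A,B)}(x), 0) otherwise. Then {R_{(A,B)} : (A,B) ∈ Γ} is an r-skeleton on AD(X). -/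

import Mathlib

/-- A space has a countable network. -/
def HasCountableNetwork (Y : Type*) [TopologicalSpace Y] : Prop :=
  ∃ N : Set (Set Y), N.Countable ∧
    ∀ (y : Y) (U : Set Y), IsOpen U → y ∈ U → ∃ n ∈ N, y ∈ n ∧ n ⊆ U

/-- An r-skeleton on a space `X` indexed by a poset `Γ`. -/
def IsRSkeleton (X : Type*) [TopologicalSpace X] (Γ : Type*) [Preorder Γ]
    (r : Γ → X → X) : Prop :=
  (∀ s t : Γ, ∃ u, s ≤ u ∧ t ≤ u) ∧
  (∀ c : ℕ →o Γ, ∃ s, IsLUB (Set.range c) s) ∧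
  (∀ s, Continuous (r s)) ∧
  (∀ s x, r s (r s x) = r s x) ∧
  (∀ s, HasCountableNetwork (Set.range (r s))) ∧
  (∀ s t, s ≤ t → ∀ x, r s (r t x) = r s x ∧ r t (r s x) = r s x) ∧
  (∀ (c : ℕ →o Γ) (s : Γ), IsLUB (Set.range c) s →
    ∀ x, Filter.Tendsto (fun n => r (c n) x) Filter.atTop (nhds (r s x))) ∧
  (∀ x, Filter.Tendsto (fun s => r s x) Filter.atTop (nhds x))

/-- The Alexandroff duplicate of `X`, as a type. -/
def AD (X : Type*) := X × Bool

/-- The Alexandroff duplicate topology: all points of `X × {1}` are isolated and the basic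
neighbourhoods of `(x, 0)` are the sets `(U × {0,1}) \ {(x,1)}` with `U` an open
neighbourhood of `x`. -/
instance (X : Type*) [TopologicalSpace X] : TopologicalSpace (AD X) where
  IsOpen S := ∀ x : X, ((x, false) : X × Bool) ∈ S →
    ∃ U : Set X, IsOpen U ∧ x ∈ U ∧
      (U ×ˢ (Set.univ : Set Bool)) \ {((x, true) : X × Bool)} ⊆ S
  isOpen_univ := fun x _ => ⟨Set.univ, isOpen_univ, trivial, fun _ _ => trivial⟩
  isOpen_inter := by
    intro S T hS hT x hx
    obtain ⟨U, hU, hxU, hUS⟩ := hS x hx.1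
    obtain ⟨V, hV, hxV, hVT⟩ := hT x hx.2
    refine ⟨U ∩ V, hU.inter hV, ⟨hxU, hxV⟩, fun p hp => ?_⟩
    exact ⟨hUS ⟨⟨hp.1.1.1, hp.1.2⟩, hp.2⟩, hVT ⟨⟨hp.1.1.2, hp.1.2⟩, hp.2⟩⟩
  isOpen_sUnion := by
    intro 𝒮 h x hx
    obtain ⟨S, hS, hxS⟩ := hx
    obtain ⟨U, hU, hxU, hUS⟩ := h S hS x hxS
    exact ⟨U, hU, hxU, fun p hp => ⟨S, hS, hUS hp⟩⟩

/-!
`R_{(A,B)}` is the retraction of `AD X` induced by `r_{(A,B)}` and the countable set `A ∪ B`: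
it keeps the isolated points over `A ∪ B` and pushes every other point to the image of
`r_{(A,B)}` in the base copy. The skeleton axioms then transfer from `r` to `R`. Its range is a
continuous image of the cosmic range of `r_{(A,B)}` plus countably many points, hence cosmic.
By σ-closedness the `A ∪ B` of a supremum of a chain is the union along the chain, and by
cofinality every point eventually lies in `A ∪ B`, so the isolated points stabilize. The only
delicate axiom is continuity at `(x, 0)`: isolated points `(y, 1)` with `y ∈ A ∪ B`, `y → x`
must converge to `(r x, 0)`. This holds because `r` fixes `A` and `cl B \ B`, while `B` is
discrete.
-/

open Set Filter Topology

section NhdsWithin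

variable {X : Type*} [TopologicalSpace X] {f : X → X} {x : X}

theorem nhdsWithin_diff_singleton_le_nhdsNE_of_eqOn [T1Space X] {A : Set X}
    (hf : ContinuousAt f x) (hA : EqOn f id A) : 𝓝[A \ {x}] x ≤ 𝓝[≠] (f x) := by
  refine le_inf ?_ (le_principal_iff.mpr ?_)
  · refine tendsto_id'.mp ((hf.mono_left nhdsWithin_le_nhds).congr' ?_)
    exact eventually_nhdsWithin_of_forall fun y hy => hA hy.1
  · by_cases hfx : f x = x
    · rw [hfx]
      exact mem_of_superset self_mem_nhdsWithin fun y hy => hy.2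
    · exact mem_nhdsWithin_of_mem_nhds (isOpen_compl_singleton.mem_nhds (Ne.symm hfx))

theorem nhdsWithin_diff_singleton_le_nhdsNE_of_isDiscrete {B : Set X} (hB : IsDiscrete B)
    (hf : EqOn f id (closure B \ B)) : 𝓝[B \ {x}] x ≤ 𝓝[≠] (f x) := by
  by_cases hxB : x ∈ B
  · rw [sdiff_eq_compl_inter, nhdsWithin_inter', isDiscrete_iff_nhdsNE.mp hB x hxB]
    exact bot_le
  by_cases hxB' : x ∈ closure B
  · rw [show f x = x from hf ⟨hxB', hxB⟩]
    exact nhdsWithin_mono x fun y hy => hy.2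
  · have hbot : 𝓝[B] x = ⊥ := not_neBot.mp (mt mem_closure_iff_nhdsWithin_neBot.mpr hxB')
    exact (nhdsWithin_mono x sdiff_subset).trans (hbot.le.trans bot_le)

theorem nhdsWithin_union_diff_singleton_le_nhdsNE [T1Space X] {A B : Set X}
    (hf : ContinuousAt f x) (hA : EqOn f id A) (hB : IsDiscrete B)
    (hfB : EqOn f id (closure B \ B)) : 𝓝[(A ∪ B) \ {x}] x ≤ 𝓝[≠] (f x) := by
  rw [union_sdiff_distrib, nhdsWithin_union]
  exact sup_le (nhdsWithin_diff_singleton_le_nhdsNE_of_eqOn hf hA)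
    (nhdsWithin_diff_singleton_le_nhdsNE_of_isDiscrete hB hfB)

end NhdsWithin

section CountableNetwork

variable {Z : Type*} [TopologicalSpace Z]

theorem hasCountableNetwork_subtype_iff {s : Set Z} :
    HasCountableNetwork s ↔ ∃ N : Set (Set Z), N.Countable ∧
      ∀ y ∈ s, ∀ U, IsOpen U → y ∈ U → ∃ n ∈ N, y ∈ n ∧ n ⊆ U := by
  constructor
  · rintro ⟨N, hN, hnet⟩
    refine ⟨image (↑) '' N, hN.image _, fun y hy U hU hyU => ?_⟩
    obtain ⟨n, hn, hyn, hnU⟩ := hnet ⟨y, hy⟩ _ (hU.preimage continuous_subtype_val) hyU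
    exact ⟨_, mem_image_of_mem _ hn, ⟨_, hyn, rfl⟩, image_subset_iff.mpr hnU⟩
  · rintro ⟨N, hN, hnet⟩
    refine ⟨preimage (↑) '' N, hN.image _, fun y V hV hyV => ?_⟩
    obtain ⟨U, hU, rfl⟩ := isOpen_induced_iff.mp hV
    obtain ⟨n, hn, hyn, hnU⟩ := hnet y y.2 U hU hyV
    exact ⟨_, mem_image_of_mem _ hn, hyn, preimage_mono hnU⟩

theorem Set.Countable.hasCountableNetwork {s : Set Z} (hs : s.Countable) :
    HasCountableNetwork s :=
  hasCountableNetwork_subtype_iff.mpr ⟨(fun y => {y}) '' s, hs.image _,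
    fun y hy _ _ hyU => ⟨{y}, mem_image_of_mem _ hy, rfl, singleton_subset_iff.mpr hyU⟩⟩

theorem HasCountableNetwork.union {s t : Set Z} (hs : HasCountableNetwork s)
    (ht : HasCountableNetwork t) : HasCountableNetwork (s ∪ t : Set Z) := by
  obtain ⟨N, hN, hsN⟩ := hasCountableNetwork_subtype_iff.mp hs
  obtain ⟨M, hM, htM⟩ := hasCountableNetwork_subtype_iff.mp ht
  refine hasCountableNetwork_subtype_iff.mpr ⟨N ∪ M, hN.union hM, ?_⟩
  rintro y (hy | hy) U hU hyU
  · obtain ⟨n, hn, hyn⟩ := hsN y hy U hU hyU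
    exact ⟨n, Or.inl hn, hyn⟩
  · obtain ⟨n, hn, hyn⟩ := htM y hy U hU hyU
    exact ⟨n, Or.inr hn, hyn⟩

theorem HasCountableNetwork.image {W : Type*} [TopologicalSpace W] {g : W → Z}
    (hg : Continuous g) {s : Set W} (hs : HasCountableNetwork s) :
    HasCountableNetwork (g '' s) := by
  obtain ⟨N, hN, hsN⟩ := hasCountableNetwork_subtype_iff.mp hs
  refine hasCountableNetwork_subtype_iff.mpr ⟨Set.image g '' N, hN.image _, ?_⟩
  rintro _ ⟨w, hw, rfl⟩ U hU hwU
  obtain ⟨n, hn, hwn, hnU⟩ := hsN w hw _ (hU.preimage hg) hwU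
  exact ⟨g '' n, mem_image_of_mem _ hn, mem_image_of_mem g hwn, image_subset_iff.mpr hnU⟩

end CountableNetwork

namespace AD

variable {X : Type*}

def base (x : X) : AD X := (x, false)

def isolated (x : X) : AD X := (x, true)

open scoped Classical in
/-- With `f = r_{(A,B)}` and `D = A ∪ B` this is the map `R_{(A,B)}` of the paper. -/
noncomputable def retraction (f : X → X) (D : Set X) : AD X → AD X
  | (x, false) => base (f x)
  | (x, true) => if x ∈ D then isolated x else base (f x)

@[elab_as_elim, induction_eliminator]
theorem induction {P : AD X → Prop} (base : ∀ x, P (base x)) (isolated : ∀ x, P (isolated x))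
    (z : AD X) : P z := by
  rcases z with ⟨x, _ | _⟩
  exacts [base x, isolated x]

variable {f g : X → X} {D E : Set X} {x : X}

theorem retraction_base : retraction f D (base x) = base (f x) := rfl

theorem retraction_isolated_of_mem (hx : x ∈ D) : retraction f D (isolated x) = isolated x :=
  if_pos hx

theorem retraction_isolated_of_notMem (hx : x ∉ D) :
    retraction f D (isolated x) = base (f x) :=
  if_neg hx

theorem retraction_id_univ (z : AD X) : retraction id univ z = z := by
  induction z with
  | base x => rfl
  | isolated x => exact retraction_isolated_of_mem (mem_univ x)

theorem retraction_retraction_of_le (hfg : ∀ x, f (g x) = f x) (hgf : ∀ x, g (f x) = f x)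
    (hDE : D ⊆ E) (z : AD X) :
    retraction f D (retraction g E z) = retraction f D z ∧
      retraction g E (retraction f D z) = retraction f D z := by
  induction z with
  | base x => exact ⟨congrArg base (hfg x), congrArg base (hgf x)⟩
  | isolated x =>
    by_cases hxD : x ∈ D
    · simp only [retraction_isolated_of_mem hxD, retraction_isolated_of_mem (hDE hxD), and_self]
    rw [retraction_isolated_of_notMem hxD, retraction_base, hgf]
    by_cases hxE : x ∈ E
    · simp only [retraction_isolated_of_mem hxE, retraction_isolated_of_notMem hxD, and_self]
    · simp only [retraction_isolated_of_notMem hxE, retraction_base, hfg, and_self]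

theorem range_retraction : range (retraction f D) = base '' range f ∪ isolated '' D := by
  refine Subset.antisymm ?_ (union_subset ?_ ?_)
  · rintro _ ⟨z, rfl⟩
    induction z with
    | base x => exact Or.inl ⟨f x, mem_range_self x, rfl⟩
    | isolated x =>
      by_cases hx : x ∈ D
      · exact Or.inr ⟨x, hx, (retraction_isolated_of_mem hx).symm⟩
      · exact Or.inl ⟨f x, mem_range_self x, (retraction_isolated_of_notMem hx).symm⟩
  · rintro _ ⟨_, ⟨x, rfl⟩, rfl⟩
    exact ⟨base x, rfl⟩
  · rintro _ ⟨x, hx, rfl⟩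
    exact ⟨isolated x, retraction_isolated_of_mem hx⟩

variable [TopologicalSpace X]

theorem isOpen_iff {S : Set (AD X)} :
    IsOpen S ↔ ∀ x, base x ∈ S → ∃ U : Set X, IsOpen U ∧ x ∈ U ∧
      ∀ y ∈ U, base y ∈ S ∧ (y ≠ x → isolated y ∈ S) := by
  refine forall_congr' fun x => imp_congr_right fun _ => exists_congr fun U =>
    and_congr_right' <| and_congr_right' ⟨fun hUS y hy => ⟨?_, fun hyx => ?_⟩, fun hUS => ?_⟩
  · exact hUS ⟨⟨hy, trivial⟩, fun h => Bool.false_ne_true (congrArg Prod.snd h)⟩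
  · exact hUS ⟨⟨hy, trivial⟩, fun h => hyx (congrArg Prod.fst h)⟩
  · rintro ⟨y, _ | _⟩ ⟨⟨hy, -⟩, hne⟩
    · exact (hUS y hy).1
    · exact (hUS y hy).2 fun hyx => hne (hyx ▸ rfl)

theorem continuous_base : Continuous (base : X → AD X) := by
  refine continuous_def.mpr fun S hS => isOpen_iff_forall_mem_open.mpr fun x hx => ?_
  obtain ⟨U, hU, hxU, hUS⟩ := isOpen_iff.mp hS x hx
  exact ⟨U, fun y hy => (hUS y hy).1, hU, hxU⟩

theorem continuous_retraction (hf : Continuous f)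
    (hD : ∀ x, 𝓝[D \ {x}] x ≤ 𝓝[≠] (f x)) : Continuous (retraction f D) := by
  refine continuous_def.mpr fun S hS => isOpen_iff.mpr fun x hx => ?_
  obtain ⟨U, hU, hfxU, hUS⟩ := isOpen_iff.mp hS (f x) hx
  obtain ⟨V, hV, hxV, hVU⟩ :=
    mem_nhdsWithin.mp (hD x (inter_mem_nhdsWithin {f x}ᶜ (hU.mem_nhds hfxU)))
  refine ⟨f ⁻¹' U ∩ V, (hU.preimage hf).inter hV, ⟨hfxU, hxV⟩, fun y ⟨hyU, hyV⟩ => ?_⟩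
  refine ⟨(hUS (f y) hyU).1, fun hyx => ?_⟩
  by_cases hyD : y ∈ D
  · obtain ⟨hyfx, hyU'⟩ := hVU ⟨hyV, hyD, hyx⟩
    rw [mem_preimage, retraction_isolated_of_mem hyD]
    exact (hUS y hyU').2 hyfx
  · rw [mem_preimage, retraction_isolated_of_notMem hyD]
    exact (hUS (f y) hyU).1

theorem hasCountableNetwork_range_retraction (hf : HasCountableNetwork (range f))
    (hD : D.Countable) : HasCountableNetwork (range (retraction f D)) := by
  rw [range_retraction]
  exact (hf.image continuous_base).union (hD.image _).hasCountableNetwork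

theorem tendsto_retraction {ι : Type*} {l : Filter ι} {F : ι → X → X} {Ds : ι → Set X}
    (hF : ∀ x, Tendsto (fun i => F i x) l (𝓝 (g x))) (hDs : ∀ x, ∀ᶠ i in l, x ∈ Ds i ↔ x ∈ E)
    (z : AD X) : Tendsto (fun i => retraction (F i) (Ds i) z) l (𝓝 (retraction g E z)) := by
  induction z with
  | base x => exact (continuous_base.tendsto _).comp (hF x)
  | isolated x =>
    by_cases hx : x ∈ E
    · rw [retraction_isolated_of_mem hx]
      exact tendsto_const_nhds.congr'
        ((hDs x).mono fun i hi => (retraction_isolated_of_mem (hi.mpr hx)).symm)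
    · rw [retraction_isolated_of_notMem hx]
      exact ((continuous_base.tendsto _).comp (hF x)).congr'
        ((hDs x).mono fun i hi => (retraction_isolated_of_notMem (mt hi.mp hx)).symm)

end AD

/-- `[Y]^{≤ω} × [X \ Y]^{≤ω}`, ordered coordinatewise. -/
abbrev CountablePairs {X : Type*} (Y : Set X) : Type _ :=
  {A : Set X // A ⊆ Y ∧ A.Countable} × {B : Set X // B ⊆ Yᶜ ∧ B.Countable}

namespace CountablePairs

variable {X : Type*} {Y : Set X}

def carrier (p : CountablePairs Y) : Set X := (p.1 : Set X) ∪ p.2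

theorem carrier_mono : Monotone (carrier : CountablePairs Y → Set X) :=
  fun _ _ h => union_subset_union h.1 h.2

theorem countable_carrier (p : CountablePairs Y) : p.carrier.Countable :=
  p.1.2.2.union p.2.2.2

theorem exists_mem_carrier (x : X) : ∃ p : CountablePairs Y, x ∈ p.carrier := by
  by_cases hx : x ∈ Y
  · exact ⟨(⟨{x}, singleton_subset_iff.mpr hx, countable_singleton x⟩,
      ⟨∅, empty_subset _, countable_empty⟩), Or.inl rfl⟩
  · exact ⟨(⟨∅, empty_subset _, countable_empty⟩,
      ⟨{x}, singleton_subset_iff.mpr hx, countable_singleton x⟩), Or.inr rfl⟩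

def iUnion (c : ℕ → CountablePairs Y) : CountablePairs Y :=
  (⟨⋃ n, (c n).1, iUnion_subset fun n => (c n).1.2.1, countable_iUnion fun n => (c n).1.2.2⟩,
    ⟨⋃ n, (c n).2, iUnion_subset fun n => (c n).2.2.1, countable_iUnion fun n => (c n).2.2.2⟩)

theorem isLUB_iUnion (c : ℕ → CountablePairs Y) : IsLUB (range c) (iUnion c) :=
  ⟨forall_mem_range.mpr fun n =>
      ⟨subset_iUnion (fun k => ((c k).1 : Set X)) n, subset_iUnion (fun k => ((c k).2 : Set X)) n⟩,
    fun _ hq => ⟨iUnion_subset fun n => (hq ⟨n, rfl⟩).1, iUnion_subset fun n => (hq ⟨n, rfl⟩).2⟩⟩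

theorem carrier_iUnion (c : ℕ → CountablePairs Y) :
    (iUnion c).carrier = ⋃ n, (c n).carrier :=
  (iUnion_union_distrib _ _).symm

variable {Γ : Set (CountablePairs Y)}

theorem coe_eq_iUnion_of_isLUB
    (hσ : ∀ c : ℕ →o CountablePairs Y, (∀ n, c n ∈ Γ) → ∀ p, IsLUB (range c) p → p ∈ Γ)
    {c : ℕ →o Γ} {s : Γ} (hs : IsLUB (range c) s) :
    (s : CountablePairs Y) = iUnion fun n => c n := by
  have hu := isLUB_iUnion fun n => (c n : CountablePairs Y)
  have huΓ : iUnion (fun n => (c n : CountablePairs Y)) ∈ Γ :=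
    hσ ⟨fun n => c n, fun _ _ h => c.mono h⟩ (fun n => (c n).2) _ hu
  have hu' : IsLUB (range c) (⟨_, huΓ⟩ : Γ) :=
    ⟨forall_mem_range.mpr fun n => hu.1 ⟨n, rfl⟩,
      fun t ht => hu.2 (forall_mem_range.mpr fun n => ht ⟨n, rfl⟩)⟩
  exact congrArg Subtype.val (hs.unique hu')

theorem eventually_mem_carrier_iff_of_isLUB
    (hσ : ∀ c : ℕ →o CountablePairs Y, (∀ n, c n ∈ Γ) → ∀ p, IsLUB (range c) p → p ∈ Γ)
    {c : ℕ →o Γ} {s : Γ} (hs : IsLUB (range c) s) (x : X) :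
    ∀ᶠ n in atTop, x ∈ (c n).1.carrier ↔ x ∈ s.1.carrier := by
  by_cases hx : x ∈ s.1.carrier
  · obtain ⟨n₀, hn₀⟩ := mem_iUnion.mp (carrier_iUnion _ ▸ coe_eq_iUnion_of_isLUB hσ hs ▸ hx)
    exact (eventually_ge_atTop n₀).mono fun n hn => iff_of_true (carrier_mono (c.mono hn) hn₀) hx
  · exact .of_forall fun n => iff_of_false (fun h => hx (carrier_mono (hs.1 ⟨n, rfl⟩) h)) hx

theorem eventually_mem_carrier (hcof : ∀ p : CountablePairs Y, ∃ q ∈ Γ, p ≤ q) (x : X) :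
    ∀ᶠ p : Γ in atTop, x ∈ p.1.carrier := by
  obtain ⟨p, hp⟩ := exists_mem_carrier (Y := Y) x
  obtain ⟨q, hqΓ, hpq⟩ := hcof p
  exact (eventually_ge_atTop ⟨q, hqΓ⟩).mono fun t ht => carrier_mono (hpq.trans ht) hp

end CountablePairs

theorem AD_rSkeleton_of_conditions_general {X : Type u} [TopologicalSpace X]
    [T2Space X]
    (Y : Set X)
    (Γ : Set ({A : Set X // A ⊆ Y ∧ A.Countable} × {B : Set X // B ⊆ Yᶜ ∧ B.Countable}))
    -- `Γ` is σ-closed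
    (hσ : ∀ c : ℕ →o {A : Set X // A ⊆ Y ∧ A.Countable} ×
        {B : Set X // B ⊆ Yᶜ ∧ B.Countable},
      (∀ n, c n ∈ Γ) → ∀ p, IsLUB (Set.range c) p → p ∈ Γ)
    -- `Γ` is cofinal
    (hcof : ∀ p : {A : Set X // A ⊆ Y ∧ A.Countable} ×
        {B : Set X // B ⊆ Yᶜ ∧ B.Countable}, ∃ q ∈ Γ, p ≤ q)
    (r : Γ → X → X) (hr : IsRSkeleton X Γ r)
    -- (*): every countable `B ⊆ X \ Y` is discrete in `X \ Y`
    (hdisc : ∀ B : Set X, B ⊆ Yᶜ → B.Countable →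
      ∀ x ∈ B, ∃ U : Set X, IsOpen U ∧ x ∈ U ∧ U ∩ Yᶜ ∩ B = {x})
    -- (***)
    (hmem : ∀ p : Γ, (p.1.1 : Set X) ⊆ Set.range (r p) ∧
      closure (p.1.2 : Set X) \ (p.1.2 : Set X) ⊆ Set.range (r p))
    (R : Γ → AD X → AD X)
    (hR1 : ∀ (p : Γ) (x : X), x ∈ (p.1.1 : Set X) ∪ (p.1.2 : Set X) →
      R p (x, true) = (x, true))
    (hR2 : ∀ (p : Γ) (x : X), x ∉ (p.1.1 : Set X) ∪ (p.1.2 : Set X) →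
      R p (x, true) = (r p x, false))
    (hR3 : ∀ (p : Γ) (x : X), R p (x, false) = (r p x, false)) :
    IsRSkeleton (AD X) Γ R := by
  obtain ⟨hdir, hlub, hcont, hidem, hnet, hcomm, hsig, hlim⟩ := hr
  obtain rfl : R = fun p => AD.retraction (r p) (CountablePairs.carrier p.1) := by
    funext p z
    induction z with
    | base x => exact hR3 p x
    | isolated x =>
      by_cases hx : x ∈ CountablePairs.carrier p.1
      · exact (hR1 p x hx).trans (AD.retraction_isolated_of_mem hx).symm
      · exact (hR2 p x hx).trans (AD.retraction_isolated_of_notMem hx).symm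
  have hfix (p : Γ) : EqOn (r p) id (range (r p)) := by
    rintro _ ⟨y, rfl⟩
    exact hidem p y
  have hB (p : Γ) : IsDiscrete (p.1.2 : Set X) := by
    refine isDiscrete_iff_forall_mem_exists_isOpen.mpr fun x hx => ?_
    obtain ⟨U, hU, -, hUB⟩ := hdisc _ p.1.2.2.1 p.1.2.2.2 x hx
    rw [inter_assoc, inter_eq_right.mpr p.1.2.2.1] at hUB
    exact ⟨U, hU, hUB⟩
  refine ⟨hdir, hlub,
    fun p => AD.continuous_retraction (hcont p) fun _ =>
      nhdsWithin_union_diff_singleton_le_nhdsNE (hcont p).continuousAt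
        ((hfix p).mono (hmem p).1) (hB p) ((hfix p).mono (hmem p).2),
    fun p z => (AD.retraction_retraction_of_le (hidem p) (hidem p) le_rfl z).1,
    fun p => AD.hasCountableNetwork_range_retraction (hnet p)
      (CountablePairs.countable_carrier p.1),
    fun p q hpq => AD.retraction_retraction_of_le (fun x => (hcomm p q hpq x).1)
      (fun x => (hcomm p q hpq x).2) (CountablePairs.carrier_mono hpq),
    fun c s hs => AD.tendsto_retraction (hsig c s hs)
      (CountablePairs.eventually_mem_carrier_iff_of_isLUB hσ hs),
    fun z => ?_⟩
  have hmem_univ (x : X) : ∀ᶠ p : Γ in atTop, x ∈ CountablePairs.carrier p.1 ↔ x ∈ univ :=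
    (CountablePairs.eventually_mem_carrier hcof x).mono fun _ hp => iff_of_true hp (mem_univ x)
  simpa only [AD.retraction_id_univ] using AD.tendsto_retraction (g := id) hlim hmem_univ z

/-- Theorem 4.6, sufficiency: Given an r-skeleton on `X` indexed by a
σ-closed cofinal `Γ ⊆ [Y]^{≤ω} × [X \ Y]^{≤ω}` satisfying (*), (**) and (***), the
family `R_{(A,B)}` defined on the Alexandroff duplicate is an r-skeleton on `AD X`. -/
theorem AD_rSkeleton_of_conditions {X : Type u} [TopologicalSpace X] [CompactSpace X]
    [T2Space X]
    (Y : Set X)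
    (Γ : Set ({A : Set X // A ⊆ Y ∧ A.Countable} × {B : Set X // B ⊆ Yᶜ ∧ B.Countable}))
    -- `Γ` is σ-closed
    (hσ : ∀ c : ℕ →o {A : Set X // A ⊆ Y ∧ A.Countable} ×
        {B : Set X // B ⊆ Yᶜ ∧ B.Countable},
      (∀ n, c n ∈ Γ) → ∀ p, IsLUB (Set.range c) p → p ∈ Γ)
    -- `Γ` is cofinal
    (hcof : ∀ p : {A : Set X // A ⊆ Y ∧ A.Countable} ×
        {B : Set X // B ⊆ Yᶜ ∧ B.Countable}, ∃ q ∈ Γ, p ≤ q)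
    (r : Γ → X → X) (hr : IsRSkeleton X Γ r)
    (hY : Y = ⋃ p : Γ, Set.range (r p))
    -- (*): every countable `B ⊆ X \ Y` is discrete in `X \ Y`
    (hdisc : ∀ B : Set X, B ⊆ Yᶜ → B.Countable →
      ∀ x ∈ B, ∃ U : Set X, IsOpen U ∧ x ∈ U ∧ U ∩ Yᶜ ∩ B = {x})
    -- (**): `cl(B) \ B ⊆ Y` and is cosmic
    (hcl : ∀ B : Set X, B ⊆ Yᶜ → B.Countable →
      closure B \ B ⊆ Y ∧ HasCountableNetwork (closure B \ B : Set X))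
    -- (***)
    (hmem : ∀ p : Γ, (p.1.1 : Set X) ⊆ Set.range (r p) ∧
      closure (p.1.2 : Set X) \ (p.1.2 : Set X) ⊆ Set.range (r p))
    (R : Γ → AD X → AD X)
    (hR1 : ∀ (p : Γ) (x : X), x ∈ (p.1.1 : Set X) ∪ (p.1.2 : Set X) →
      R p (x, true) = (x, true))
    (hR2 : ∀ (p : Γ) (x : X), x ∉ (p.1.1 : Set X) ∪ (p.1.2 : Set X) →
      R p (x, true) = (r p x, false))
    (hR3 : ∀ (p : Γ) (x : X), R p (x, false) = (r p x, false)) :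
    IsRSkeleton (AD X) Γ R :=
  AD_rSkeleton_of_conditions_general Y Γ hσ hcof r hr hdisc hmem R hR1 hR2 hR3
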